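/- arXiv:1902.05003 — 2 statements merged into one kernel-verified Lean document; each statement's English description precedes it below -/
import Mathlib

section
/- The function ‖·‖_T defined by ‖v‖_T = arctan ‖v‖ on the open unit ball is subadditive with respect to Möbius addition: for all x, y ∈ B, ‖x‖_T − ‖y‖_T ≤ ‖x ⊕ y‖_T ≤ ‖x‖_T + ‖y‖_T. -/
/-!
Write `a = ‖x‖`, `b = ‖y‖`, `c = ⟪x, y⟫`. Then
`‖x ⊕ y‖² = (a² + 2c + b²) / (1 + 2c + a²b²)`, which is increasing in `c`, and Cauchy–Schwarz
confines `c` to `[-ab, ab]`; the endpoints (collinear `x`, `y`) give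
`|a - b| / (1 - ab) ≤ ‖x ⊕ y‖ ≤ (a + b) / (1 + ab)`.
The addition formula `arctan a ± arctan b = arctan ((a ± b) / (1 ∓ ab))` then compares these
bounds with `arctan a ± arctan b`.
-/

open Real

noncomputable def mobiusAdd {n : ℕ} (u v : EuclideanSpace ℝ (Fin n)) :
    EuclideanSpace ℝ (Fin n) :=
  (1 + 2 * (inner ℝ u v : ℝ) + ‖u‖ ^ 2 * ‖v‖ ^ 2)⁻¹ •
    ((1 + 2 * (inner ℝ u v : ℝ) + ‖v‖ ^ 2) • u + (1 - ‖u‖ ^ 2) • v)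

-- Both sides vanish when the denominator does.
theorem norm_mobiusAdd_sq {n : ℕ} (x y : EuclideanSpace ℝ (Fin n)) :
    ‖mobiusAdd x y‖ ^ 2 = (‖x‖ ^ 2 + 2 * inner ℝ x y + ‖y‖ ^ 2) /
      (1 + 2 * inner ℝ x y + ‖x‖ ^ 2 * ‖y‖ ^ 2) := by
  rw [mobiusAdd, norm_smul, mul_pow, norm_inv, Real.norm_eq_abs, inv_pow, sq_abs]
  set D := 1 + 2 * inner ℝ x y + ‖x‖ ^ 2 * ‖y‖ ^ 2
  have hnum : ‖(1 + 2 * inner ℝ x y + ‖y‖ ^ 2) • x + (1 - ‖x‖ ^ 2) • y‖ ^ 2 =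
      D * (‖x‖ ^ 2 + 2 * inner ℝ x y + ‖y‖ ^ 2) := by
    rw [norm_add_sq_real, norm_smul, norm_smul, real_inner_smul_left, real_inner_smul_right,
      Real.norm_eq_abs, Real.norm_eq_abs, mul_pow, mul_pow, sq_abs, sq_abs]
    ring
  rw [hnum]
  rcases eq_or_ne D 0 with hD | hD
  · simp [hD]
  · field_simp

section Scalar

variable {a b c : ℝ}

theorem mobius_denom_pos (hab : a * b < 1) (hc : |c| ≤ a * b) :
    0 < 1 + 2 * c + a ^ 2 * b ^ 2 := by
  have hc' : -(a * b) ≤ c := (abs_le.mp hc).1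
  nlinarith [pow_pos (sub_pos.mpr hab) 2]

theorem mobius_ratio_le_sq (ha : 0 ≤ a) (hb : 0 ≤ b) (ha1 : a < 1) (hb1 : b < 1)
    (hc : |c| ≤ a * b) :
    (a ^ 2 + 2 * c + b ^ 2) / (1 + 2 * c + a ^ 2 * b ^ 2) ≤ ((a + b) / (1 + a * b)) ^ 2 := by
  have hD := mobius_denom_pos (by nlinarith) hc
  rw [div_pow, div_le_div_iff₀ hD (by positivity)]
  have key : (a + b) ^ 2 * (1 + 2 * c + a ^ 2 * b ^ 2) - (a ^ 2 + 2 * c + b ^ 2) * (1 + a * b) ^ 2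
      = 2 * (a * b - c) * ((1 - a ^ 2) * (1 - b ^ 2)) := by ring
  have hc' : 0 ≤ a * b - c := by linarith [(abs_le.mp hc).2]
  have h1 : 0 ≤ (1 - a ^ 2) * (1 - b ^ 2) := mul_nonneg (by nlinarith) (by nlinarith)
  nlinarith [mul_nonneg hc' h1]

theorem sq_le_mobius_ratio (ha : 0 ≤ a) (hb : 0 ≤ b) (ha1 : a < 1) (hb1 : b < 1)
    (hc : |c| ≤ a * b) :
    (|a - b| / (1 - a * b)) ^ 2 ≤ (a ^ 2 + 2 * c + b ^ 2) / (1 + 2 * c + a ^ 2 * b ^ 2) := by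
  have hD := mobius_denom_pos (by nlinarith) hc
  have hab : 0 < 1 - a * b := by nlinarith
  rw [div_pow, sq_abs, div_le_div_iff₀ (by positivity) hD]
  have key : (a ^ 2 + 2 * c + b ^ 2) * (1 - a * b) ^ 2 - (a - b) ^ 2 * (1 + 2 * c + a ^ 2 * b ^ 2)
      = 2 * (c + a * b) * ((1 - a ^ 2) * (1 - b ^ 2)) := by ring
  have hc' : 0 ≤ c + a * b := by linarith [(abs_le.mp hc).1]
  have h1 : 0 ≤ (1 - a ^ 2) * (1 - b ^ 2) := mul_nonneg (by nlinarith) (by nlinarith)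
  nlinarith [mul_nonneg hc' h1]

theorem arctan_add_div_one_add_mul_le (ha : 0 ≤ a) (hb : 0 ≤ b) (hab : a * b < 1) :
    arctan ((a + b) / (1 + a * b)) ≤ arctan a + arctan b := by
  rw [arctan_add hab, arctan_le_arctan_iff]
  exact div_le_div_of_nonneg_left (by positivity) (by linarith) (by nlinarith [mul_nonneg ha hb])

theorem arctan_sub_le_arctan_abs_sub_div (ha : 0 ≤ a) (hb : 0 ≤ b) (hab : a * b < 1) :
    arctan a - arctan b ≤ arctan (|a - b| / (1 - a * b)) := by
  have hab0 : 0 ≤ a * b := mul_nonneg ha hb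
  rw [sub_eq_add_neg, ← arctan_neg, arctan_add (by nlinarith), arctan_le_arctan_iff]
  calc (a + -b) / (1 - a * -b) ≤ |a - b| / (1 + a * b) := by
        rw [mul_neg, sub_neg_eq_add, ← sub_eq_add_neg]
        exact div_le_div_of_nonneg_right (le_abs_self _) (by positivity)
    _ ≤ |a - b| / (1 - a * b) :=
        div_le_div_of_nonneg_left (abs_nonneg _) (by linarith) (by linarith)

end Scalar

section Norm

variable {n : ℕ} {x y : EuclideanSpace ℝ (Fin n)}

theorem norm_mobiusAdd_le (hx : ‖x‖ < 1) (hy : ‖y‖ < 1) :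
    ‖mobiusAdd x y‖ ≤ (‖x‖ + ‖y‖) / (1 + ‖x‖ * ‖y‖) := by
  rw [← sq_le_sq₀ (norm_nonneg _) (by positivity), norm_mobiusAdd_sq]
  exact mobius_ratio_le_sq (norm_nonneg x) (norm_nonneg y) hx hy (abs_real_inner_le_norm x y)

theorem abs_sub_div_le_norm_mobiusAdd (hx : ‖x‖ < 1) (hy : ‖y‖ < 1) :
    |‖x‖ - ‖y‖| / (1 - ‖x‖ * ‖y‖) ≤ ‖mobiusAdd x y‖ := by
  have hxy : 0 ≤ 1 - ‖x‖ * ‖y‖ := by nlinarith [norm_nonneg x, norm_nonneg y]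
  rw [← sq_le_sq₀ (by positivity) (norm_nonneg _), norm_mobiusAdd_sq]
  exact sq_le_mobius_ratio (norm_nonneg x) (norm_nonneg y) hx hy (abs_real_inner_le_norm x y)

end Norm

theorem mobius_arctan_subadditive {n : ℕ} (x y : EuclideanSpace ℝ (Fin n))
    (hx : ‖x‖ < 1) (hy : ‖y‖ < 1) :
    arctan ‖x‖ - arctan ‖y‖ ≤ arctan ‖mobiusAdd x y‖ ∧
    arctan ‖mobiusAdd x y‖ ≤ arctan ‖x‖ + arctan ‖y‖ := by
  have hxy : ‖x‖ * ‖y‖ < 1 := by nlinarith [norm_nonneg x, norm_nonneg y]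
  constructor
  · calc arctan ‖x‖ - arctan ‖y‖ ≤ arctan (|‖x‖ - ‖y‖| / (1 - ‖x‖ * ‖y‖)) :=
          arctan_sub_le_arctan_abs_sub_div (norm_nonneg x) (norm_nonneg y) hxy
      _ ≤ arctan ‖mobiusAdd x y‖ := arctan_mono (abs_sub_div_le_norm_mobiusAdd hx hy)
  · calc arctan ‖mobiusAdd x y‖ ≤ arctan ((‖x‖ + ‖y‖) / (1 + ‖x‖ * ‖y‖)) :=
          arctan_mono (norm_mobiusAdd_le hx hy)
      _ ≤ arctan ‖x‖ + arctan ‖y‖ :=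
          arctan_add_div_one_add_mul_le (norm_nonneg x) (norm_nonneg y) hxy
end

section
/- Left gyrotranslations preserve the gyrometric: for all u, x, y in the open unit ball B of ℝⁿ, ‖(−(u ⊕ x)) ⊕ (u ⊕ y)‖ = ‖(−x) ⊕ y‖. -/
open Real

/-!
Writing `D(a, b) = 1 + 2⟪a, b⟫ + ‖a‖²‖b‖²` for the denominator of `a ⊕ b`, one has
`1 - ‖a ⊕ b‖² = (1 - ‖a‖²)(1 - ‖b‖²) / D(a, b)`, so `‖(-a) ⊕ b‖` is determined by `‖a‖`, `‖b‖`
and `D(-a, b)`. Left translation by `u` rescales `1 - ‖·‖²` by `(1 - ‖u‖²) / D(u, ·)`, and a direct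
computation shows `D(-(u ⊕ x), u ⊕ y) = (1 - ‖u‖²)² D(-x, y) / (D(u, x) D(u, y))`; these factors
cancel in the formula for `1 - ‖(-(u ⊕ x)) ⊕ (u ⊕ y)‖²`.
-/

lemma one_sub_sq_norm_pos {E : Type*} [SeminormedAddGroup E] {u : E} (hu : ‖u‖ < 1) :
    0 < 1 - ‖u‖ ^ 2 :=
  sub_pos.2 (pow_lt_one₀ (norm_nonneg u) hu two_ne_zero)

section MobiusDenom

variable {n : ℕ}

noncomputable def mobiusDenom (u v : EuclideanSpace ℝ (Fin n)) : ℝ :=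
  1 + 2 * inner ℝ u v + ‖u‖ ^ 2 * ‖v‖ ^ 2

lemma mobiusDenom_pos {u v : EuclideanSpace ℝ (Fin n)} (hu : ‖u‖ < 1) (hv : ‖v‖ < 1) :
    0 < mobiusDenom u v := by
  have hinner : -(‖u‖ * ‖v‖) ≤ inner ℝ u v := neg_le_of_abs_le (abs_real_inner_le_norm u v)
  have huv : ‖u‖ * ‖v‖ < 1 := mul_lt_one_of_nonneg_of_lt_one_left (norm_nonneg u) hu hv.le
  unfold mobiusDenom
  nlinarith [mul_pos (sub_pos.2 huv) (sub_pos.2 huv)]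

lemma mobiusAdd_eq (u v : EuclideanSpace ℝ (Fin n)) :
    mobiusAdd u v = (mobiusDenom u v)⁻¹ •
      ((1 + 2 * inner ℝ u v + ‖v‖ ^ 2) • u + (1 - ‖u‖ ^ 2) • v) := rfl

lemma norm_sq_mobiusAdd_numerator (u v : EuclideanSpace ℝ (Fin n)) :
    ‖(1 + 2 * inner ℝ u v + ‖v‖ ^ 2) • u + (1 - ‖u‖ ^ 2) • v‖ ^ 2
      = mobiusDenom u v * ‖u + v‖ ^ 2 := by
  rw [norm_add_sq_real, norm_add_sq_real u v]
  simp only [norm_smul, mul_pow, real_inner_smul_left, real_inner_smul_right, norm_eq_abs, sq_abs,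
    mobiusDenom]
  ring

lemma norm_sq_mobiusAdd (u v : EuclideanSpace ℝ (Fin n)) :
    ‖mobiusAdd u v‖ ^ 2 = ‖u + v‖ ^ 2 / mobiusDenom u v := by
  rw [mobiusAdd_eq, norm_smul, mul_pow, norm_sq_mobiusAdd_numerator, norm_inv, inv_pow,
    norm_eq_abs, sq_abs]
  rcases eq_or_ne (mobiusDenom u v) 0 with h | h
  · simp [h]
  · field_simp

lemma one_sub_norm_sq_mobiusAdd {u v : EuclideanSpace ℝ (Fin n)} (hu : ‖u‖ < 1) (hv : ‖v‖ < 1) :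
    1 - ‖mobiusAdd u v‖ ^ 2 = (1 - ‖u‖ ^ 2) * (1 - ‖v‖ ^ 2) / mobiusDenom u v := by
  have hD := (mobiusDenom_pos hu hv).ne'
  rw [norm_sq_mobiusAdd, norm_add_sq_real]
  field_simp
  simp only [mobiusDenom]
  ring

lemma norm_mobiusAdd_lt_one {u v : EuclideanSpace ℝ (Fin n)} (hu : ‖u‖ < 1) (hv : ‖v‖ < 1) :
    ‖mobiusAdd u v‖ < 1 := by
  have hpos : 0 < 1 - ‖mobiusAdd u v‖ ^ 2 := by
    rw [one_sub_norm_sq_mobiusAdd hu hv]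
    exact div_pos (mul_pos (one_sub_sq_norm_pos hu) (one_sub_sq_norm_pos hv))
      (mobiusDenom_pos hu hv)
  nlinarith [norm_nonneg (mobiusAdd u v)]

lemma inner_mobiusAdd_mobiusAdd (u x y : EuclideanSpace ℝ (Fin n)) :
    inner ℝ (mobiusAdd u x) (mobiusAdd u y) =
      ((1 + 2 * inner ℝ u x + ‖x‖ ^ 2) * (1 + 2 * inner ℝ u y + ‖y‖ ^ 2) * ‖u‖ ^ 2
        + (1 + 2 * inner ℝ u x + ‖x‖ ^ 2) * (1 - ‖u‖ ^ 2) * inner ℝ u y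
        + (1 + 2 * inner ℝ u y + ‖y‖ ^ 2) * (1 - ‖u‖ ^ 2) * inner ℝ u x
        + (1 - ‖u‖ ^ 2) ^ 2 * inner ℝ x y) / (mobiusDenom u x * mobiusDenom u y) := by
  rw [mobiusAdd_eq, mobiusAdd_eq, real_inner_smul_left, real_inner_smul_right]
  simp only [inner_add_left, inner_add_right, real_inner_smul_left, real_inner_smul_right,
    real_inner_self_eq_norm_sq, real_inner_comm x u]
  rw [div_eq_inv_mul, mul_inv]
  ring

lemma mobiusDenom_neg_mobiusAdd_mobiusAdd {u x y : EuclideanSpace ℝ (Fin n)} (hu : ‖u‖ < 1)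
    (hx : ‖x‖ < 1) (hy : ‖y‖ < 1) :
    mobiusDenom (-mobiusAdd u x) (mobiusAdd u y) =
      (1 - ‖u‖ ^ 2) ^ 2 * mobiusDenom (-x) y / (mobiusDenom u x * mobiusDenom u y) := by
  have hDx := (mobiusDenom_pos hu hx).ne'
  have hDy := (mobiusDenom_pos hu hy).ne'
  rw [mobiusDenom, inner_neg_left, norm_neg, inner_mobiusAdd_mobiusAdd, norm_sq_mobiusAdd,
    norm_sq_mobiusAdd]
  field_simp
  simp only [mobiusDenom, inner_neg_left, norm_neg, norm_add_sq_real]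
  ring

end MobiusDenom

theorem mobius_left_translation_preserves_gyrometric {n : ℕ}
    (u x y : EuclideanSpace ℝ (Fin n)) (hu : ‖u‖ < 1) (hx : ‖x‖ < 1) (hy : ‖y‖ < 1) :
    ‖mobiusAdd (-(mobiusAdd u x)) (mobiusAdd u y)‖ = ‖mobiusAdd (-x) y‖ := by
  have hnx : ‖-x‖ < 1 := by rwa [norm_neg]
  have hnux : ‖-mobiusAdd u x‖ < 1 := by rw [norm_neg]; exact norm_mobiusAdd_lt_one hu hx
  have hux := (mobiusDenom_pos hu hx).ne'
  have huy := (mobiusDenom_pos hu hy).ne'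
  have hnxy := (mobiusDenom_pos hnx hy).ne'
  have hu2 := (one_sub_sq_norm_pos hu).ne'
  have hsq : 1 - ‖mobiusAdd (-mobiusAdd u x) (mobiusAdd u y)‖ ^ 2 = 1 - ‖mobiusAdd (-x) y‖ ^ 2 := by
    rw [one_sub_norm_sq_mobiusAdd hnux (norm_mobiusAdd_lt_one hu hy),
      one_sub_norm_sq_mobiusAdd hnx hy, norm_neg, norm_neg, one_sub_norm_sq_mobiusAdd hu hx,
      one_sub_norm_sq_mobiusAdd hu hy, mobiusDenom_neg_mobiusAdd_mobiusAdd hu hx hy]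
    field_simp
  exact (sq_eq_sq₀ (norm_nonneg _) (norm_nonneg _)).1 (by linarith)
end
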